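/- Let 𝒜 ⊆ ℕ be a sequence. The following are equivalent: (i) A is O-regularly varying, i.e. for every λ > 0 one has A(λx) ≍ A(x) as x → ∞; (ii) A(2x) = O(A(x)); (iii) s_{𝒜,h}(x) = Θ(A(x)^h) for every h ≥ 1; (iv) s_{𝒜,h}(2x) = O(s_{𝒜,h}(x)) for some h ≥ 1 (equivalently, for every h ≥ 1). -/

import Mathlib

/-!
Both `A` and `s_{A,h}` are nondecreasing, so a doubling bound `f(2x) = O(f(x))` iterates to
`f(cx) = O(f(x))` for every `c > 0`. The sandwich `A(x/h)^h ≤ s_{A,h}(x) ≤ A(x)^h` then moves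
doubling back and forth between `A` and `s_{A,h}`, and together with doubling of `A` gives
`s_{A,h} ≍ A^h`. Conversely, the smaller entry of a pair with sum `≤ 2x` is `≤ x`, so
`s_{A,2}(2x) ≤ 2 A(x) A(2x)`; hence `A(2x)^2 = O(s_{A,2}(2x))` forces `A(2x) = O(A(x))`.
-/

open Filter Asymptotics MeasureTheory

/-- Counting function `A(x) = |𝒜 ∩ [0,x]|`. -/
noncomputable def cntA (A : Set ℕ) (x : ℝ) : ℕ :=
  {n : ℕ | n ∈ A ∧ (n : ℝ) ≤ x}.ncard

/-- The increasing enumeration `a₀ < a₁ < ⋯` of a set `A ⊆ ℕ`. -/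
noncomputable def seqA (A : Set ℕ) (n : ℕ) : ℕ := Nat.nth (· ∈ A) n

/-- `A` is an OR sequence: `A(2x) = O(A(x))`. -/
def ORseq (A : Set ℕ) : Prop :=
  (fun x : ℝ => (cntA A (2 * x) : ℝ)) =O[atTop] (fun x : ℝ => (cntA A x : ℝ))

/-- `A` is a PI sequence: `a_{2n} = O(a_n)`. -/
def PIseq (A : Set ℕ) : Prop :=
  (fun n : ℕ => (seqA A (2 * n) : ℝ)) =O[atTop] (fun n : ℕ => (seqA A n : ℝ))

/-- `A` is an OR₊ sequence: an infinite subset of ℕ that is both OR and PI. -/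
def ORplus (A : Set ℕ) : Prop := A.Infinite ∧ ORseq A ∧ PIseq A

/-- `sA A h x` is the number of ordered `h`-tuples of elements of `A` with sum at most `x`. -/
noncomputable def sA (A : Set ℕ) (h : ℕ) (x : ℝ) : ℕ :=
  {t : Fin h → ℕ | (∀ i, t i ∈ A) ∧ ((∑ i, t i : ℕ) : ℝ) ≤ x}.ncard

section Doubling

variable {f : ℝ → ℝ}

theorem isBigO_comp_two_pow_mul_of_doubling (h2 : (fun x => f (2 * x)) =O[atTop] f) (k : ℕ) :
    (fun x => f (2 ^ k * x)) =O[atTop] f := by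
  induction k with
  | zero => simpa using isBigO_refl f atTop
  | succ k ih =>
    have h := h2.comp_tendsto (tendsto_id.const_mul_atTop (pow_pos two_pos k))
    simp only [Function.comp_def, id, ← mul_assoc, ← pow_succ'] at h
    exact h.trans ih

theorem isBigO_comp_const_mul_of_doubling (hf : Monotone f) (hf0 : 0 ≤ f)
    (h2 : (fun x => f (2 * x)) =O[atTop] f) (c : ℝ) :
    (fun x => f (c * x)) =O[atTop] f := by
  obtain ⟨k, hk⟩ := pow_unbounded_of_one_lt c one_lt_two
  refine IsBigO.trans ?_ (isBigO_comp_two_pow_mul_of_doubling h2 k)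
  refine IsBigO.of_bound 1 ?_
  filter_upwards [eventually_ge_atTop 0] with x hx
  rw [one_mul, Real.norm_of_nonneg (hf0 _), Real.norm_of_nonneg (hf0 _)]
  exact hf (mul_le_mul_of_nonneg_right hk.le hx)

theorem isBigO_comp_const_mul_of_comp_inv_mul {E : Type*} [Norm E] {g : ℝ → E} {c : ℝ}
    (hc : 0 < c) (h : (fun x => g (c⁻¹ * x)) =O[atTop] g) :
    g =O[atTop] fun x => g (c * x) := by
  simpa only [Function.comp_def, id, inv_mul_cancel_left₀ hc.ne'] using
    h.comp_tendsto (tendsto_id.const_mul_atTop hc)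

theorem isTheta_comp_const_mul_of_doubling (hf : Monotone f) (hf0 : 0 ≤ f)
    (h2 : (fun x => f (2 * x)) =O[atTop] f) {c : ℝ} (hc : 0 < c) :
    (fun x => f (c * x)) =Θ[atTop] f :=
  ⟨isBigO_comp_const_mul_of_doubling hf hf0 h2 c,
    isBigO_comp_const_mul_of_comp_inv_mul hc (isBigO_comp_const_mul_of_doubling hf hf0 h2 _)⟩

end Doubling

theorem Set.ncard_univ_pi {ι : Type*} [Fintype ι] {α : ι → Type*} (s : ∀ i, Set (α i)) :
    (Set.univ.pi s).ncard = ∏ i, (s i).ncard := by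
  rw [← Nat.card_coe_set_eq, Nat.card_congr (Equiv.Set.univPi s), Nat.card_pi]
  simp only [Nat.card_coe_set_eq]

section Counting

variable (A : Set ℕ)

theorem finite_setOf_mem_and_le (x : ℝ) : {n : ℕ | n ∈ A ∧ (n : ℝ) ≤ x}.Finite :=
  (Set.finite_Iic ⌊x⌋₊).subset fun _ hn => Nat.le_floor hn.2

theorem cntA_mono : Monotone (cntA A) := fun _ _ hxy =>
  Set.ncard_le_ncard (fun _ hn => ⟨hn.1, hn.2.trans hxy⟩) (finite_setOf_mem_and_le A _)

theorem ncard_univ_pi_setOf_mem_and_le {h : ℕ} (x : Fin h → ℝ) :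
    (Set.univ.pi fun i => {n : ℕ | n ∈ A ∧ (n : ℝ) ≤ x i}).ncard = ∏ i, cntA A (x i) :=
  Set.ncard_univ_pi _

theorem setOf_sA_subset_pi (h : ℕ) (x : ℝ) :
    {t : Fin h → ℕ | (∀ i, t i ∈ A) ∧ ((∑ i, t i : ℕ) : ℝ) ≤ x} ⊆
      Set.univ.pi fun _ => {n : ℕ | n ∈ A ∧ (n : ℝ) ≤ x} := by
  intro t ht i _
  have hle : t i ≤ ∑ j, t j := Finset.single_le_sum (fun j _ => (t j).zero_le) (Finset.mem_univ i)
  exact ⟨ht.1 i, le_trans (by exact_mod_cast hle) ht.2⟩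

theorem finite_setOf_sA (h : ℕ) (x : ℝ) :
    {t : Fin h → ℕ | (∀ i, t i ∈ A) ∧ ((∑ i, t i : ℕ) : ℝ) ≤ x}.Finite :=
  (Set.Finite.pi fun _ => finite_setOf_mem_and_le A x).subset (setOf_sA_subset_pi A h x)

theorem sA_mono (h : ℕ) : Monotone (sA A h) := fun _ _ hxy =>
  Set.ncard_le_ncard (fun _ ht => ⟨ht.1, ht.2.trans hxy⟩) (finite_setOf_sA A h _)

theorem sA_le_cntA_pow (h : ℕ) (x : ℝ) : sA A h x ≤ cntA A x ^ h := by
  have := Set.ncard_le_ncard (setOf_sA_subset_pi A h x)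
    (Set.Finite.pi fun _ => finite_setOf_mem_and_le A x)
  rwa [ncard_univ_pi_setOf_mem_and_le A fun _ => x, Finset.prod_const, Finset.card_univ,
    Fintype.card_fin] at this

theorem cntA_div_pow_le_sA {h : ℕ} (hh : 0 < h) (x : ℝ) : cntA A (x / h) ^ h ≤ sA A h x := by
  have hsub : (Set.univ.pi fun _ : Fin h => {n : ℕ | n ∈ A ∧ (n : ℝ) ≤ x / h}) ⊆
      {t : Fin h → ℕ | (∀ i, t i ∈ A) ∧ ((∑ i, t i : ℕ) : ℝ) ≤ x} := by
    intro t ht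
    simp only [Set.mem_univ_pi, Set.mem_ofPred_eq] at ht
    refine ⟨fun i => (ht i).1, ?_⟩
    calc ((∑ i, t i : ℕ) : ℝ) = ∑ i, (t i : ℝ) := by push_cast; rfl
      _ ≤ ∑ _i : Fin h, x / h := Finset.sum_le_sum fun i _ => (ht i).2
      _ = x := by simp [field]
  have := Set.ncard_le_ncard hsub (finite_setOf_sA A h x)
  rwa [ncard_univ_pi_setOf_mem_and_le A fun _ => x / h, Finset.prod_const, Finset.card_univ,
    Fintype.card_fin] at this

theorem sA_two_two_mul_le (x : ℝ) : sA A 2 (2 * x) ≤ 2 * (cntA A x * cntA A (2 * x)) := by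
  set B : ℝ → Set ℕ := fun y => {n : ℕ | n ∈ A ∧ (n : ℝ) ≤ y}
  have hsub : {t : Fin 2 → ℕ | (∀ i, t i ∈ A) ∧ ((∑ i, t i : ℕ) : ℝ) ≤ 2 * x} ⊆
      Set.univ.pi ![B x, B (2 * x)] ∪ Set.univ.pi ![B (2 * x), B x] := by
    rintro t ⟨hA, hsum⟩
    simp only [Fin.sum_univ_two, Nat.cast_add] at hsum
    have h0 : (0 : ℝ) ≤ t 0 := Nat.cast_nonneg _
    have h1 : (0 : ℝ) ≤ t 1 := Nat.cast_nonneg _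
    simp only [Set.mem_union, Set.mem_univ_pi, Fin.forall_fin_two, B, Set.mem_ofPred_eq,
      Matrix.cons_val_zero, Matrix.cons_val_one, hA, true_and]
    rcases le_or_gt (t 0 : ℝ) x with hx | hx
    · exact Or.inl ⟨hx, by linarith⟩
    · exact Or.inr ⟨by linarith, by linarith⟩
  have hfin : ∀ y z : ℝ, (Set.univ.pi ![B y, B z]).Finite := fun y z =>
    Set.Finite.pi fun i => by fin_cases i <;> exact finite_setOf_mem_and_le A _
  have hcard : ∀ y z : ℝ, (Set.univ.pi ![B y, B z]).ncard = cntA A y * cntA A z := fun y z => by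
    rw [Set.ncard_univ_pi, Fin.prod_univ_two]
    rfl
  calc sA A 2 (2 * x)
      ≤ (Set.univ.pi ![B x, B (2 * x)] ∪ Set.univ.pi ![B (2 * x), B x]).ncard :=
        Set.ncard_le_ncard hsub ((hfin _ _).union (hfin _ _))
    _ ≤ (Set.univ.pi ![B x, B (2 * x)]).ncard + (Set.univ.pi ![B (2 * x), B x]).ncard :=
        Set.ncard_union_le _ _
    _ = 2 * (cntA A x * cntA A (2 * x)) := by rw [hcard, hcard]; ring

theorem isBigO_sA_cntA_pow (h : ℕ) :
    (fun x => (sA A h x : ℝ)) =O[atTop] fun x => (cntA A x : ℝ) ^ h :=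
  isBigO_of_le _ fun x => by
    simp only [norm_pow, Real.norm_natCast]
    exact_mod_cast sA_le_cntA_pow A h x

end Counting

namespace ORseq

variable {A : Set ℕ}

theorem isTheta_cntA_comp_const_mul (hA : ORseq A) {c : ℝ} (hc : 0 < c) :
    (fun x => (cntA A (c * x) : ℝ)) =Θ[atTop] fun x => (cntA A x : ℝ) :=
  isTheta_comp_const_mul_of_doubling (Nat.mono_cast.comp (cntA_mono A))
    (fun _ => Nat.cast_nonneg _) hA hc

theorem isTheta_sA (hA : ORseq A) {h : ℕ} (hh : 0 < h) :
    (fun x => (sA A h x : ℝ)) =Θ[atTop] fun x => (cntA A x : ℝ) ^ h := by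
  refine ⟨isBigO_sA_cntA_pow A h, ?_⟩
  have hscale := (hA.isTheta_cntA_comp_const_mul (inv_pos.mpr (Nat.cast_pos.mpr hh))).symm
  refine (hscale.isBigO.pow h).trans (isBigO_of_le _ fun x => ?_)
  simp only [norm_pow, Real.norm_natCast, inv_mul_eq_div]
  exact_mod_cast cntA_div_pow_le_sA A hh x

theorem isBigO_sA_two_mul (hA : ORseq A) {h : ℕ} (hh : 0 < h) :
    (fun x => (sA A h (2 * x) : ℝ)) =O[atTop] fun x => (sA A h x : ℝ) := by
  have hΘ := hA.isTheta_sA hh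
  have hcomp := hΘ.isBigO.comp_tendsto (tendsto_id.const_mul_atTop two_pos)
  exact (hcomp.trans (IsBigO.pow hA h)).trans hΘ.symm.isBigO

theorem of_isBigO_cntA_sq_sA_two
    (h : (fun x => (cntA A x : ℝ) ^ 2) =O[atTop] fun x => (sA A 2 x : ℝ)) : ORseq A := by
  obtain ⟨C, hC0, hC⟩ := h.exists_pos
  refine IsBigO.of_bound (2 * C) ?_
  filter_upwards [(tendsto_id.const_mul_atTop two_pos).eventually hC.bound] with x hx
  simp only [id, norm_pow, Real.norm_natCast] at hx ⊢
  have hpair : (sA A 2 (2 * x) : ℝ) ≤ 2 * ((cntA A x : ℝ) * cntA A (2 * x)) := by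
    exact_mod_cast sA_two_two_mul_le A x
  have hx0 : (0 : ℝ) ≤ cntA A x := Nat.cast_nonneg _
  have h2x0 : (0 : ℝ) ≤ cntA A (2 * x) := Nat.cast_nonneg _
  nlinarith [mul_le_mul_of_nonneg_left hpair hC0.le, mul_nonneg hC0.le hx0]

theorem of_isBigO_sA_two_mul {h : ℕ} (hh : 0 < h)
    (hO : (fun x => (sA A h (2 * x) : ℝ)) =O[atTop] fun x => (sA A h x : ℝ)) : ORseq A := by
  have hscale := isBigO_comp_const_mul_of_doubling (Nat.mono_cast.comp (sA_mono A h))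
    (fun _ => Nat.cast_nonneg _) hO (2 * h)
  have hlower : (fun x => (cntA A (2 * x) : ℝ) ^ h) =O[atTop]
      fun x => (sA A h (2 * h * x) : ℝ) := isBigO_of_le _ fun x => by
    have hdiv : 2 * h * x / h = 2 * x := by field_simp
    simp only [norm_pow, Real.norm_natCast]
    exact_mod_cast hdiv ▸ cntA_div_pow_le_sA A hh (2 * h * x)
  exact IsBigO.of_pow hh.ne' ((hlower.trans hscale).trans (isBigO_sA_cntA_pow A h))

end ORseq

theorem stmt_12_general (A : Set ℕ) :
    List.TFAE [
      -- (i) A is O-regularly varying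
      ∀ lam : ℝ, 0 < lam →
        (fun x : ℝ => (cntA A (lam * x) : ℝ)) =Θ[atTop] (fun x : ℝ => (cntA A x : ℝ)),
      -- (ii) A(2x) = O(A(x))
      (fun x : ℝ => (cntA A (2 * x) : ℝ)) =O[atTop] (fun x : ℝ => (cntA A x : ℝ)),
      -- (iii) s_{A,h}(x) = Θ(A(x)^h) for every h ≥ 1
      ∀ h : ℕ, 1 ≤ h →
        (fun x : ℝ => (sA A h x : ℝ)) =Θ[atTop] (fun x : ℝ => (cntA A x : ℝ) ^ h),
      -- (iv) for some h ≥ 1, s_{A,h}(2x) = O(s_{A,h}(x))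
      ∃ h : ℕ, 1 ≤ h ∧
        (fun x : ℝ => (sA A h (2 * x) : ℝ)) =O[atTop] (fun x : ℝ => (sA A h x : ℝ)),
      -- (iv') for every h ≥ 1, s_{A,h}(2x) = O(s_{A,h}(x))
      ∀ h : ℕ, 1 ≤ h →
        (fun x : ℝ => (sA A h (2 * x) : ℝ)) =O[atTop] (fun x : ℝ => (sA A h x : ℝ))
    ] := by
  tfae_have 1 → 2 := fun h1 => (h1 2 two_pos).1
  tfae_have 2 → 1 := fun h2 _ hlam => ORseq.isTheta_cntA_comp_const_mul h2 hlam
  tfae_have 2 → 3 := fun h2 _ hh => ORseq.isTheta_sA h2 hh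
  tfae_have 3 → 2 := fun h3 => ORseq.of_isBigO_cntA_sq_sA_two (h3 2 one_le_two).symm.isBigO
  tfae_have 2 → 5 := fun h2 _ hh => ORseq.isBigO_sA_two_mul h2 hh
  tfae_have 5 → 4 := fun h5 => ⟨1, le_rfl, h5 1 le_rfl⟩
  tfae_have 4 → 2 := fun ⟨_, hh, hO⟩ => ORseq.of_isBigO_sA_two_mul hh hO
  tfae_finish

theorem stmt_12 (A : Set ℕ) (hA : A.Infinite) :
    List.TFAE [
      -- (i) A is O-regularly varying
      ∀ lam : ℝ, 0 < lam →
        (fun x : ℝ => (cntA A (lam * x) : ℝ)) =Θ[atTop] (fun x : ℝ => (cntA A x : ℝ)),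
      -- (ii) A(2x) = O(A(x))
      (fun x : ℝ => (cntA A (2 * x) : ℝ)) =O[atTop] (fun x : ℝ => (cntA A x : ℝ)),
      -- (iii) s_{A,h}(x) = Θ(A(x)^h) for every h ≥ 1
      ∀ h : ℕ, 1 ≤ h →
        (fun x : ℝ => (sA A h x : ℝ)) =Θ[atTop] (fun x : ℝ => (cntA A x : ℝ) ^ h),
      -- (iv) for some h ≥ 1, s_{A,h}(2x) = O(s_{A,h}(x))
      ∃ h : ℕ, 1 ≤ h ∧
        (fun x : ℝ => (sA A h (2 * x) : ℝ)) =O[atTop] (fun x : ℝ => (sA A h x : ℝ)),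
      -- (iv') for every h ≥ 1, s_{A,h}(2x) = O(s_{A,h}(x))
      ∀ h : ℕ, 1 ≤ h →
        (fun x : ℝ => (sA A h (2 * x) : ℝ)) =O[atTop] (fun x : ℝ => (sA A h x : ℝ))
    ] :=
  stmt_12_general A
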